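/- arXiv:0806.0231 — 6 statements merged into one kernel-verified Lean document; each statement's English description precedes it below -/
import Mathlib

section
/- Let n, B be coprime positive integers and let p, q, r be integers with p \ge 1, q \ge 1, r \ge 0 and p*B + q*n \le n*B. Set s := p + r*n. Then floor((q*n + s*B) * (1 + 1/(n*B))) = q*n + s*B + r. -/
/-!
Writing `s = p + r n`, one has `(q n + s B) / (n B) = q / B + p / n + r`, so
`(q n + s B) (1 + 1 / (n B)) = (q n + s B + r) + (q n + p B) / (n B)`. The last summand lies in
`(0, 1)`: if `p B + q n = n B` then `n ∣ p B`, hence `n ∣ p` by coprimality, contradicting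
`0 < p < n`.
-/

theorem Int.mul_add_mul_ne_mul_of_isCoprime {n B p q : ℤ} (hcop : IsCoprime n B)
    (hp : 0 < p) (hpn : p < n) : p * B + q * n ≠ n * B := by
  intro h
  have hdvd : n ∣ p * B := ⟨B - q, by linarith⟩
  have := Int.le_of_dvd hp (hcop.dvd_of_dvd_mul_right hdvd)
  omega

theorem Int.floor_intCast_add_div {K : Type*} [Field K] [LinearOrder K] [IsStrictOrderedRing K]
    [FloorRing K] (k : ℤ) {a b : K} (ha : 0 ≤ a) (hab : a < b) : ⌊(k : K) + a / b⌋ = k := by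
  have hb : 0 < b := ha.trans_lt hab
  rw [Int.floor_intCast_add, Int.floor_eq_zero_iff.mpr ⟨div_nonneg ha hb.le, (div_lt_one hb).mpr hab⟩,
    add_zero]

theorem mul_one_add_one_div_mul_eq {K : Type*} [Field K] {n B : K} (hn : n ≠ 0) (hB : B ≠ 0)
    (p q r : K) :
    (q * n + (p + r * n) * B) * (1 + 1 / (n * B))
      = (q * n + (p + r * n) * B + r) + (q * n + p * B) / (n * B) := by
  field_simp
  ring

theorem floor_estrella4_general (n B : ℤ) (hn : 0 < n) (hB : 0 < B)
    (hcop : IsCoprime n B) (p q r : ℤ) (hp : 1 ≤ p) (hq : 1 ≤ q)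
    (hle : p * B + q * n ≤ n * B) :
    ⌊((q * n + (p + r * n) * B : ℤ) : ℚ) * (1 + 1 / ((n : ℚ) * B))⌋
      = q * n + (p + r * n) * B + r := by
  have hpn : p < n := by nlinarith
  have hlt : q * n + p * B < n * B := by
    linarith [lt_of_le_of_ne hle (Int.mul_add_mul_ne_mul_of_isCoprime (q := q) hcop hp hpn)]
  have hpos : 0 ≤ q * n + p * B := by positivity
  have hsplit : ((q * n + (p + r * n) * B : ℤ) : ℚ) * (1 + 1 / ((n : ℚ) * B))
      = ((q * n + (p + r * n) * B + r : ℤ) : ℚ) + ((q * n + p * B : ℤ) : ℚ) / ((n * B : ℤ) : ℚ) := by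
    push_cast
    exact mul_one_add_one_div_mul_eq (by positivity) (by positivity) _ _ _
  rw [hsplit]
  exact Int.floor_intCast_add_div _ (by exact_mod_cast hpos) (by exact_mod_cast hlt)

theorem floor_estrella4 (n B : ℤ) (hn : 0 < n) (hB : 0 < B)
    (hcop : IsCoprime n B) (p q r : ℤ) (hp : 1 ≤ p) (hq : 1 ≤ q) (hr : 0 ≤ r)
    (hle : p * B + q * n ≤ n * B) :
    ⌊((q * n + (p + r * n) * B : ℤ) : ℚ) * (1 + 1 / ((n : ℚ) * B))⌋
      = q * n + (p + r * n) * B + r :=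
  floor_estrella4_general n B hn hB hcop p q r hp hq hle
end

section
/- Let n, B be coprime integers with n \ge 2 and B \ge 2, and let N, B', N'' be nonnegative integers satisfying N*B - n*B' = 1 and n*B' + B*N'' = n*B - 1. Then for all integers p, q \ge 1 and r \ge 0 with p*B + q*n \le n*B, setting s := p + r*n and x := q*n + s*B, one has floor(x*B'/B) + floor(x*N''/n) + floor(x*(1 + 1/(n*B))) = 2*x - 2. -/
/-!
With `x = q n + (p + r n) B`, each numerator is a remainder plus a multiple of its denominator:
the remainders are `B - q`, `n - p` and `q n + p B`, all in range, the last one because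
`q n + p B = n B` would force `B ∣ q` with `0 < q < B`. Since `N + N'' = n`, the three
quotients add up to `2 x - 2`.
-/

theorem Int.floor_intCast_div_eq_of_eq_add_mul {K : Type*} [Field K] [LinearOrder K]
    [IsStrictOrderedRing K] [FloorRing K] {c b : ℤ} (a k : ℤ) (h : c = a + k * b) (ha : 0 ≤ a)
    (hab : a < b) : ⌊(c : K) / b⌋ = k := by
  have hb : (0 : K) < b := by exact_mod_cast ha.trans_lt hab
  have ha' : (0 : K) ≤ a := by exact_mod_cast ha
  have hab' : (a : K) < b := by exact_mod_cast hab
  rw [Int.floor_eq_iff, le_div_iff₀ hb, div_lt_iff₀ hb, h]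
  push_cast
  constructor <;> linarith

theorem add_mul_lt_mul_of_isCoprime {n B p q : ℤ} (hcop : IsCoprime n B) (hq : 0 < q)
    (hqB : q < B) (hle : q * n + p * B ≤ n * B) : q * n + p * B < n * B := by
  refine hle.lt_of_ne fun heq => ?_
  have hdvd : B ∣ q := hcop.symm.dvd_of_dvd_mul_right ⟨n - p, by linear_combination heq⟩
  exact absurd (Int.le_of_dvd hq hdvd) (not_le.mpr hqB)

theorem floor_sum_eq_dos_general (n B : ℤ) (hn : 2 ≤ n) (hB : 2 ≤ B)
    (hcop : IsCoprime n B) (N B' N'' : ℤ)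
    (hrel1 : N * B - n * B' = 1) (hrel2 : n * B' + B * N'' = n * B - 1)
    (p q r : ℤ) (hp : 1 ≤ p) (hq : 1 ≤ q)
    (hle : p * B + q * n ≤ n * B) :
    ⌊((q * n + (p + r * n) * B : ℤ) : ℚ) * (B' : ℚ) / (B : ℚ)⌋
      + ⌊((q * n + (p + r * n) * B : ℤ) : ℚ) * (N'' : ℚ) / (n : ℚ)⌋
      + ⌊((q * n + (p + r * n) * B : ℤ) : ℚ) * (1 + 1 / ((n : ℚ) * B))⌋
      = 2 * (q * n + (p + r * n) * B) - 2 := by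
  set s := p + r * n
  set x := q * n + s * B
  have hqB : q < B := by nlinarith
  have hpn : p < n := by nlinarith
  have hNN'' : N + N'' = n := by
    refine mul_left_cancel₀ (by omega : B ≠ 0) ?_
    linear_combination hrel1 + hrel2
  have hf1 : ⌊(x : ℚ) * B' / B⌋ = q * N + s * B' - 1 := by
    rw [← Int.cast_mul]
    exact Int.floor_intCast_div_eq_of_eq_add_mul (B - q) (q * N + s * B' - 1)
      (by linear_combination -q * hrel1) (by omega) (by omega)
  have hf2 : ⌊(x : ℚ) * N'' / n⌋ = q * N'' + s * (B - B') - 1 - r := by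
    rw [← Int.cast_mul]
    exact Int.floor_intCast_div_eq_of_eq_add_mul (n - p) (q * N'' + s * (B - B') - 1 - r)
      (by linear_combination s * hrel2) (by omega) (by omega)
  have hf3 : ⌊(x : ℚ) * (1 + 1 / ((n : ℚ) * B))⌋ = x + r := by
    have hnB : (n : ℚ) * B ≠ 0 := by positivity
    rw [show (x : ℚ) * (1 + 1 / ((n : ℚ) * B)) = ((x * (n * B + 1) : ℤ) : ℚ) / ((n * B : ℤ) : ℚ)
      by push_cast; field_simp]
    exact Int.floor_intCast_div_eq_of_eq_add_mul (q * n + p * B) (x + r) (by ring)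
      (by nlinarith)
      (add_mul_lt_mul_of_isCoprime hcop (by omega) hqB (by linarith))
  rw [hf1, hf2, hf3]
  linear_combination q * hNN''

theorem floor_sum_eq_dos (n B : ℤ) (hn : 2 ≤ n) (hB : 2 ≤ B)
    (hcop : IsCoprime n B) (N B' N'' : ℤ)
    (hN : 0 ≤ N) (hB' : 0 ≤ B') (hN'' : 0 ≤ N'')
    (hrel1 : N * B - n * B' = 1) (hrel2 : n * B' + B * N'' = n * B - 1)
    (p q r : ℤ) (hp : 1 ≤ p) (hq : 1 ≤ q) (hr : 0 ≤ r)
    (hle : p * B + q * n ≤ n * B) :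
    ⌊((q * n + (p + r * n) * B : ℤ) : ℚ) * (B' : ℚ) / (B : ℚ)⌋
      + ⌊((q * n + (p + r * n) * B : ℤ) : ℚ) * (N'' : ℚ) / (n : ℚ)⌋
      + ⌊((q * n + (p + r * n) * B : ℤ) : ℚ) * (1 + 1 / ((n : ℚ) * B))⌋
      = 2 * (q * n + (p + r * n) * B) - 2 :=
  floor_sum_eq_dos_general n B hn hB hcop N B' N'' hrel1 hrel2 p q r hp hq hle
end

section
/- Let e, n, b be positive integers with gcd(n, b) = 1. Define H := { p/(n*e) + q/(b*e) + r/e : p, q, r integers, p \ge 1, q \ge 1, r \ge 0, p*b + q*n \le n*b } as a set of rationals, and B := { (p,q,s) : p, q, s integers, p \ge 1, q \ge 1, p*b + q*n \le n*b, 0 \le s \le e - 1 }. Then the map (p,q,s) \mapsto p/(n*e) + q/(b*e) + s/e is a bijection from B onto H \cap [0,1]. -/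
/-!
Clearing denominators, `p/(ne) + q/(be) + s/e = (A + s·nb)/(nbe)` with `A = pb + qn`, and the
constraints `p, q ≥ 1`, `pb + qn ≤ nb` put `A` in `(0, nb]`. So `x ≤ 1` reads `s ≤ e - 1`, and
the numerator `A + s·nb` determines `s` as the quotient for a remainder taken in `(0, nb]`. Then
`A` determines `p` modulo `n` because `n` and `b` are coprime, and `0 < p < n` pins down `p`,
hence `q`.
-/

namespace Int

variable {N a a' r s s' e n b p p' q q' : ℤ}

theorem add_mul_le_mul_iff_lt (ha : 0 < a) (haN : a ≤ N) : a + r * N ≤ e * N ↔ r < e := by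
  constructor
  · intro h
    exact lt_of_mul_lt_mul_right (by linarith) (ha.le.trans haN)
  · intro h
    nlinarith

theorem eq_of_add_mul_eq_add_mul (ha : 0 < a) (haN : a ≤ N) (ha' : 0 < a') (ha'N : a' ≤ N)
    (h : a + s * N = a' + s' * N) : s = s' := by
  rcases lt_trichotomy s s' with hlt | heq | hgt
  · nlinarith
  · exact heq
  · nlinarith

theorem lt_of_mul_add_mul_le (hn : 0 < n) (hb : 0 < b) (hq : 1 ≤ q)
    (h : p * b + q * n ≤ n * b) : p < n := by
  nlinarith

theorem eq_of_mul_add_mul_eq (hcop : IsCoprime n b) (hp : 0 ≤ p) (hpn : p < n) (hp' : 0 ≤ p')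
    (hp'n : p' < n) (h : p * b + q * n = p' * b + q' * n) : p = p' ∧ q = q' := by
  have hdvd : n ∣ p - p' := hcop.dvd_of_dvd_mul_right ⟨q' - q, by linear_combination h⟩
  have hpp' : p = p' := sub_eq_zero.mp <|
    eq_zero_of_abs_lt_dvd hdvd (abs_sub_lt_of_nonneg_of_lt hp hpn hp' hp'n)
  subst hpp'
  exact ⟨rfl, mul_right_cancel₀ (b := n) (by omega) (by linarith)⟩

end Int

def candidateJump (n b e : ℕ) (p q s : ℤ) : ℚ :=
  p / (n * e) + q / (b * e) + s / e

section candidateJump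

variable {n b e : ℕ} {p q s p' q' s' : ℤ}

theorem candidateJump_eq_div (hn : 0 < n) (hb : 0 < b) (he : 0 < e) :
    candidateJump n b e p q s = ((p * b + q * n + s * (n * b) : ℤ) : ℚ) / (n * b * e) := by
  rw [candidateJump]
  field_simp
  push_cast
  ring

theorem candidateJump_nonneg (hp : 0 ≤ p) (hq : 0 ≤ q) (hs : 0 ≤ s) :
    0 ≤ candidateJump n b e p q s := by
  have hp : (0 : ℚ) ≤ p := by exact_mod_cast hp
  have hq : (0 : ℚ) ≤ q := by exact_mod_cast hq
  have hs : (0 : ℚ) ≤ s := by exact_mod_cast hs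
  unfold candidateJump
  positivity

theorem candidateJump_le_one_iff (hn : 0 < n) (hb : 0 < b) (he : 0 < e) (hp : 1 ≤ p)
    (hq : 1 ≤ q) (hpq : p * b + q * n ≤ n * b) :
    candidateJump n b e p q s ≤ 1 ↔ s ≤ (e : ℤ) - 1 := by
  rw [candidateJump_eq_div hn hb he, div_le_one (by positivity), Int.le_sub_one_iff,
    ← Int.add_mul_le_mul_iff_lt (by nlinarith) hpq,
    show ((n : ℚ) * b * e) = ((e * (n * b) : ℤ) : ℚ) by push_cast; ring, Int.cast_le]

theorem eq_of_candidateJump_eq (hn : 0 < n) (hb : 0 < b) (he : 0 < e) (hcop : n.Coprime b)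
    (hp : 1 ≤ p) (hq : 1 ≤ q) (hpq : p * b + q * n ≤ n * b)
    (hp' : 1 ≤ p') (hq' : 1 ≤ q') (hpq' : p' * b + q' * n ≤ n * b)
    (h : candidateJump n b e p q s = candidateJump n b e p' q' s') :
    p = p' ∧ q = q' ∧ s = s' := by
  simp only [candidateJump_eq_div hn hb he, div_left_inj' (by positivity : (n * b * e : ℚ) ≠ 0),
    Int.cast_inj] at h
  have hn' : (0 : ℤ) < n := by omega
  have hb' : (0 : ℤ) < b := by omega
  obtain rfl := Int.eq_of_add_mul_eq_add_mul (by nlinarith) hpq (by nlinarith) hpq' h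
  obtain ⟨rfl, rfl⟩ := Int.eq_of_mul_add_mul_eq (Nat.isCoprime_iff_coprime.mpr hcop)
    (by omega) (Int.lt_of_mul_add_mul_le hn' hb' hq hpq) (by omega)
    (Int.lt_of_mul_add_mul_le hn' hb' hq' hpq') (add_right_cancel h)
  exact ⟨rfl, rfl, rfl⟩

end candidateJump

theorem panoramix_one (e n b : ℕ) (he : 0 < e) (hn : 0 < n) (hb : 0 < b)
    (hcop : Nat.gcd n b = 1) :
    Set.BijOn
      (fun t : ℤ × ℤ × ℤ =>
        (t.1 : ℚ) / (n * e) + (t.2.1 : ℚ) / (b * e) + (t.2.2 : ℚ) / e)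
      {t : ℤ × ℤ × ℤ | 1 ≤ t.1 ∧ 1 ≤ t.2.1 ∧ t.1 * b + t.2.1 * n ≤ n * b ∧
        0 ≤ t.2.2 ∧ t.2.2 ≤ (e : ℤ) - 1}
      ({x : ℚ | ∃ p q r : ℤ, 1 ≤ p ∧ 1 ≤ q ∧ 0 ≤ r ∧ p * b + q * n ≤ n * b ∧
          x = (p : ℚ) / (n * e) + (q : ℚ) / (b * e) + (r : ℚ) / e}
        ∩ Set.Icc (0 : ℚ) 1) := by
  refine ⟨?mapsTo, ?injOn, ?surjOn⟩
  case mapsTo =>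
    rintro ⟨p, q, s⟩ ⟨hp, hq, hpq, hs, hse⟩
    exact ⟨⟨p, q, s, hp, hq, hs, hpq, rfl⟩, candidateJump_nonneg (by omega) (by omega) hs,
      (candidateJump_le_one_iff hn hb he hp hq hpq).2 hse⟩
  case injOn =>
    rintro ⟨p, q, s⟩ ⟨hp, hq, hpq, -, -⟩ ⟨p', q', s'⟩ ⟨hp', hq', hpq', -, -⟩ h
    obtain ⟨rfl, rfl, rfl⟩ := eq_of_candidateJump_eq hn hb he hcop hp hq hpq hp' hq' hpq' h
    rfl
  case surjOn =>
    rintro x ⟨⟨p, q, r, hp, hq, hr, hpq, rfl⟩, -, hx⟩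
    exact ⟨(p, q, r), ⟨hp, hq, hpq, hr, (candidateJump_le_one_iff hn hb he hp hq hpq).1 hx⟩, rfl⟩
end

section
/- Let e, n, b be positive integers with gcd(n, b) = 1, and define H and B as follows: H := { p/(n*e) + q/(b*e) + r/e : p,q,r integers, p,q \ge 1, r \ge 0, p*b + q*n \le n*b } and B := { (p,q,s) integer triples : p,q \ge 1, p*b + q*n \le n*b, 0 \le s \le e-1 }. Then every element x of H with x > 1 can be written uniquely as x = (p/(n*e) + q/(b*e) + s/e) + r with (p,q,s) \in B and r a positive integer. -/
/-!
Clearing denominators, the triple `(p, q, s)` contributes `p b + q n + s n b` over `n b e`.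
Coprimality of `n` and `b` makes this numerator determine `p` modulo `n`, `q` modulo `b`, and
then `s`; it also rules out `p b + q n = n b`, so every triple of `B` has value in `[0, 1)`.
Hence the positive integer in the decomposition is `⌊x⌋`, and the triple is recovered from the
fractional part. Existence comes from dividing the `r` of a representation of `x` by `e`.
-/

section

variable {n b : ℤ}

theorem eq_of_coprime_of_dvd_sub_mul (hcop : IsCoprime n b) {p p' : ℤ} (hp : 0 ≤ p ∧ p < n)
    (hp' : 0 ≤ p' ∧ p' < n) (hdvd : n ∣ (p - p') * b) : p = p' := by
  have := Int.eq_zero_of_abs_lt_dvd (hcop.dvd_of_dvd_mul_right hdvd)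
    (abs_lt.2 ⟨by omega, by omega⟩)
  omega

theorem eq_of_mul_add_mul_add_mul_eq (hcop : IsCoprime n b) {p q s p' q' s' : ℤ}
    (hp : 0 ≤ p ∧ p < n) (hq : 0 ≤ q ∧ q < b) (hp' : 0 ≤ p' ∧ p' < n) (hq' : 0 ≤ q' ∧ q' < b)
    (h : p * b + q * n + s * (n * b) = p' * b + q' * n + s' * (n * b)) :
    p = p' ∧ q = q' ∧ s = s' := by
  have hpp : p = p' :=
    eq_of_coprime_of_dvd_sub_mul hcop hp hp' ⟨q' - q + (s' - s) * b, by linear_combination h⟩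
  have hqq : q = q' :=
    eq_of_coprime_of_dvd_sub_mul hcop.symm hq hq' ⟨p' - p + (s' - s) * n, by linear_combination h⟩
  subst hpp hqq
  have hnb : n * b ≠ 0 := mul_ne_zero (by omega) (by omega)
  exact ⟨rfl, rfl, mul_right_cancel₀ hnb (by linarith)⟩

theorem mul_add_mul_lt_of_coprime (hcop : IsCoprime n b) (hn : 0 < n) (hb : 0 < b) {p q : ℤ}
    (hp : 1 ≤ p) (hq : 1 ≤ q) (hpq : p * b + q * n ≤ n * b) : p * b + q * n < n * b := by
  refine hpq.lt_of_ne fun h => ?_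
  have hpn : p < n := by nlinarith
  have hdvd : n ∣ p * b := ⟨b - q, by linear_combination h⟩
  have := Int.le_of_dvd (by omega) (hcop.dvd_of_dvd_mul_right hdvd)
  omega

end

/-- The set `B` of the paper. -/
def admissibleTriples (e n b : ℕ) : Set (ℤ × ℤ × ℤ) :=
  {t | 1 ≤ t.1 ∧ 1 ≤ t.2.1 ∧ t.1 * b + t.2.1 * n ≤ n * b ∧ 0 ≤ t.2.2 ∧ t.2.2 ≤ (e : ℤ) - 1}

/-- The paper's map `B → H ∩ [0, 1]`. -/
def tripleValue (e n b : ℕ) (t : ℤ × ℤ × ℤ) : ℚ :=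
  (t.1 : ℚ) / (n * e) + (t.2.1 : ℚ) / (b * e) + (t.2.2 : ℚ) / e

section

variable {e n b : ℕ} {t : ℤ × ℤ × ℤ}

theorem tripleValue_eq_div (hn : n ≠ 0) (hb : b ≠ 0) (he : e ≠ 0) :
    tripleValue e n b t =
      ((t.1 * b + t.2.1 * n + t.2.2 * (n * b) : ℤ) : ℚ) / (n * b * e) := by
  unfold tripleValue
  push_cast
  field_simp

theorem tripleValue_add_ediv (e n b : ℕ) (p q r : ℤ) :
    tripleValue e n b (p, q, r) = tripleValue e n b (p, q, r % e) + (r / e : ℤ) := by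
  rcases eq_or_ne e 0 with rfl | he
  · simp
  have hr : (r : ℚ) = (r % e : ℤ) + e * (r / e : ℤ) := by
    exact_mod_cast (Int.emod_add_mul_ediv r e).symm
  simp only [tripleValue, hr]
  field_simp
  ring

theorem lt_of_mem_admissibleTriples (hn : 0 < n) (hb : 0 < b)
    (ht : t ∈ admissibleTriples e n b) :
    t.1 < n ∧ t.2.1 < b := by
  obtain ⟨hp, hq, hpq, -, -⟩ := ht
  constructor <;> nlinarith

theorem tripleValue_mem_Ico (hcop : IsCoprime (n : ℤ) b) (hn : 0 < n) (hb : 0 < b)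
    (ht : t ∈ admissibleTriples e n b) : tripleValue e n b t ∈ Set.Ico 0 1 := by
  obtain ⟨hp, hq, hpq, hs, hse⟩ := ht
  have he : 0 < e := by omega
  have hlt := mul_add_mul_lt_of_coprime hcop (by omega) (by omega) hp hq hpq
  have hnum : t.1 * b + t.2.1 * n + t.2.2 * (n * b) < n * b * e := by
    nlinarith [mul_le_mul_of_nonneg_right hse (by positivity : (0 : ℤ) ≤ n * b)]
  rw [tripleValue_eq_div hn.ne' hb.ne' he.ne']
  refine ⟨div_nonneg (by exact_mod_cast (by positivity : (0 : ℤ) ≤ _)) (by positivity), ?_⟩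
  rw [div_lt_one (by positivity)]
  exact_mod_cast hnum

theorem floor_tripleValue_add_intCast (hcop : IsCoprime (n : ℤ) b) (hn : 0 < n) (hb : 0 < b)
    (ht : t ∈ admissibleTriples e n b) (m : ℤ) : ⌊tripleValue e n b t + m⌋ = m := by
  rw [Int.floor_add_intCast, Int.floor_eq_zero_iff.2 (tripleValue_mem_Ico hcop hn hb ht), zero_add]

theorem tripleValue_injOn (hcop : IsCoprime (n : ℤ) b) (hn : 0 < n) (hb : 0 < b) :
    Set.InjOn (tripleValue e n b) (admissibleTriples e n b) := by
  rintro ⟨p, q, s⟩ ht ⟨p', q', s'⟩ ht' h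
  obtain ⟨hpn, hqb⟩ := lt_of_mem_admissibleTriples hn hb ht
  obtain ⟨hpn', hqb'⟩ := lt_of_mem_admissibleTriples hn hb ht'
  obtain ⟨hp, hq, -, hs, hse⟩ := ht
  obtain ⟨hp', hq', -, -, -⟩ := ht'
  have he : e ≠ 0 := by omega
  rw [tripleValue_eq_div hn.ne' hb.ne' he, tripleValue_eq_div hn.ne' hb.ne' he,
    div_left_inj' (by positivity), Int.cast_inj] at h
  obtain ⟨rfl, rfl, rfl⟩ := eq_of_mul_add_mul_add_mul_eq hcop ⟨by omega, hpn⟩ ⟨by omega, hqb⟩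
    ⟨by omega, hpn'⟩ ⟨by omega, hqb'⟩ h
  rfl

end

theorem panoramix_two (e n b : ℕ) (he : 0 < e) (hn : 0 < n) (hb : 0 < b)
    (hcop : Nat.gcd n b = 1) (x : ℚ)
    (hx : x ∈ {y : ℚ | ∃ p q r : ℤ, 1 ≤ p ∧ 1 ≤ q ∧ 0 ≤ r ∧ p * b + q * n ≤ n * b ∧
      y = (p : ℚ) / (n * e) + (q : ℚ) / (b * e) + (r : ℚ) / e})
    (hx1 : 1 < x) :
    ∃! t : (ℤ × ℤ × ℤ) × ℤ,
      (1 ≤ t.1.1 ∧ 1 ≤ t.1.2.1 ∧ t.1.1 * b + t.1.2.1 * n ≤ n * b ∧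
        0 ≤ t.1.2.2 ∧ t.1.2.2 ≤ (e : ℤ) - 1) ∧ 1 ≤ t.2 ∧
      x = ((t.1.1 : ℚ) / (n * e) + (t.1.2.1 : ℚ) / (b * e) + (t.1.2.2 : ℚ) / e)
        + (t.2 : ℚ) := by
  obtain ⟨p, q, r, hp, hq, -, hpq, hx⟩ := hx
  have hcopZ : IsCoprime (n : ℤ) b := Nat.isCoprime_iff_coprime.2 hcop
  have heZ : (0 : ℤ) < e := by exact_mod_cast he
  have ht : (p, q, r % e) ∈ admissibleTriples e n b :=
    ⟨hp, hq, hpq, Int.emod_nonneg r heZ.ne', Int.le_sub_one_of_lt (Int.emod_lt_of_pos r heZ)⟩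
  have hxt : x = tripleValue e n b (p, q, r % e) + (r / e : ℤ) :=
    hx.trans (tripleValue_add_ediv e n b p q r)
  have hfloor : ⌊x⌋ = r / e := hxt ▸ floor_tripleValue_add_intCast hcopZ hn hb ht _
  refine ⟨((p, q, r % e), r / e), ⟨ht, ?_, hxt⟩, ?_⟩
  · exact hfloor ▸ Int.le_floor.2 (by exact_mod_cast hx1.le)
  rintro ⟨t', m'⟩ ⟨ht', -, hxt'⟩
  have hm : r / e = m' := hfloor ▸ hxt' ▸ floor_tripleValue_add_intCast hcopZ hn hb ht' m'
  subst hm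
  have hval : tripleValue e n b t' = tripleValue e n b (p, q, r % e) := by
    have : tripleValue e n b t' + (r / e : ℤ) = tripleValue e n b (p, q, r % e) + (r / e : ℤ) :=
      hxt'.symm.trans hxt
    linarith
  exact Prod.ext (tripleValue_injOn hcopZ hn hb ht' ht hval) rfl
end

section
/- Let a, b be coprime positive integers and set H := { p/a + q/b : p, q positive integers }. Then the map (s,q) \mapsto s/a + q/b is a bijection from T := { (s,q) : 1 \le s \le a, 1 \le q \le b } onto the set Omega := { x \in H : x \le 2 and x - 1 \notin H }. -/
/-!
Since `a` and `b` are coprime, the integer pairs `(p, q)` with `p / a + q / b = x` form a single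
orbit of `(p, q) ↦ (p + k * a, q - k * b)`. Subtracting `1` from `x` amounts to replacing `p` by
`p - a` (or `q` by `q - b`), so `x - 1 ∈ H` exactly when some representative of `x` with positive
coordinates has `p > a` or `q > b`. Inside the box `[1, a] × [1, b]` no shift keeps both
coordinates positive after this subtraction, and distinct points of the box lie in distinct
orbits.
-/

/-- The set `H` of the paper. -/
def jumpingSet (a b : ℕ) : Set ℚ :=
  {x | ∃ p q : ℤ, 1 ≤ p ∧ 1 ≤ q ∧ x = (p : ℚ) / a + (q : ℚ) / b}

section

variable {a b : ℕ}

lemma div_add_div_eq_div_add_div_iff (ha : 0 < a) (hb : 0 < b) {p q p' q' : ℤ} :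
    (p : ℚ) / a + q / b = p' / a + q' / b ↔ p * b + a * q = p' * b + a * q' := by
  have ha0 : (a : ℚ) ≠ 0 := by positivity
  have hb0 : (b : ℚ) ≠ 0 := by positivity
  rw [div_add_div _ _ ha0 hb0, div_add_div _ _ ha0 hb0, div_left_inj' (by positivity)]
  norm_cast

lemma exists_eq_add_mul_of_div_add_div_eq (ha : 0 < a) (hb : 0 < b) (hcop : a.Coprime b)
    {p q p' q' : ℤ} (h : (p : ℚ) / a + q / b = p' / a + q' / b) :
    ∃ k : ℤ, p' = p + k * a ∧ q = q' + k * b := by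
  rw [div_add_div_eq_div_add_div_iff ha hb] at h
  have hdvd : (a : ℤ) ∣ (p' - p) * b := ⟨q - q', by linarith⟩
  obtain ⟨k, hk⟩ := (Nat.isCoprime_iff_coprime.2 hcop).dvd_of_dvd_mul_right hdvd
  refine ⟨k, by linarith, ?_⟩
  have hcancel : (a : ℤ) * q = a * (q' + k * b) := by linear_combination h + b * hk
  exact mul_left_cancel₀ (by positivity) hcancel

lemma div_add_div_le_two (ha : 0 < a) (hb : 0 < b) {p q : ℤ} (hp : p ≤ a) (hq : q ≤ b) :
    (p : ℚ) / a + q / b ≤ 2 := by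
  have hpa : (p : ℚ) / a ≤ 1 := (div_le_one (by positivity)).2 (by exact_mod_cast hp)
  have hqb : (q : ℚ) / b ≤ 1 := (div_le_one (by positivity)).2 (by exact_mod_cast hq)
  linarith

lemma div_add_div_sub_one_not_mem_jumpingSet (ha : 0 < a) (hb : 0 < b) (hcop : a.Coprime b)
    {s q : ℤ} (hs : s ≤ a) (hq : q ≤ b) :
    (s : ℚ) / a + q / b - 1 ∉ jumpingSet a b := by
  rintro ⟨p, q', hp, hq', h⟩
  have hshift : (s : ℚ) / a + q / b = (p + a : ℤ) / a + q' / b := by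
    rw [sub_eq_iff_eq_add] at h
    rw [h, Int.cast_add, Int.cast_natCast, add_div, div_self (by positivity)]
    ring
  obtain ⟨k, hk, hkq⟩ := exists_eq_add_mul_of_div_add_div_eq ha hb hcop hshift
  have hk0 : k ≤ 0 := by nlinarith
  nlinarith

lemma le_of_sub_one_not_mem_jumpingSet (ha : 0 < a) (hb : 0 < b) {p q : ℤ} (hp : 1 ≤ p)
    (hq : 1 ≤ q) (h : (p : ℚ) / a + q / b - 1 ∉ jumpingSet a b) : p ≤ a ∧ q ≤ b := by
  constructor
  · by_contra! hpa
    refine h ⟨p - a, q, by omega, hq, ?_⟩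
    push_cast
    field_simp
    ring
  · by_contra! hqb
    refine h ⟨p, q - b, hp, by omega, ?_⟩
    push_cast
    field_simp
    ring

lemma eq_of_div_add_div_eq (ha : 0 < a) (hb : 0 < b) (hcop : a.Coprime b) {s q s' q' : ℤ}
    (hs₁ : 1 ≤ s) (hs₂ : s ≤ a) (hs₁' : 1 ≤ s') (hs₂' : s' ≤ a)
    (h : (s : ℚ) / a + q / b = s' / a + q' / b) : s = s' ∧ q = q' := by
  obtain ⟨k, rfl, rfl⟩ := exists_eq_add_mul_of_div_add_div_eq ha hb hcop h
  have hk : k = 0 := by nlinarith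
  simp [hk]

end

theorem wasp_one (a b : ℕ) (ha : 0 < a) (hb : 0 < b) (hcop : Nat.gcd a b = 1) :
    Set.BijOn (fun t : ℤ × ℤ => (t.1 : ℚ) / a + (t.2 : ℚ) / b)
      {t : ℤ × ℤ | 1 ≤ t.1 ∧ t.1 ≤ a ∧ 1 ≤ t.2 ∧ t.2 ≤ b}
      {x : ℚ | (∃ p q : ℤ, 1 ≤ p ∧ 1 ≤ q ∧ x = (p : ℚ) / a + (q : ℚ) / b) ∧
        x ≤ 2 ∧ ¬ ∃ p q : ℤ, 1 ≤ p ∧ 1 ≤ q ∧ x - 1 = (p : ℚ) / a + (q : ℚ) / b} := by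
  change Set.BijOn _ _ {x | x ∈ jumpingSet a b ∧ x ≤ 2 ∧ x - 1 ∉ jumpingSet a b}
  refine ⟨?_, ?_, ?_⟩
  · rintro ⟨s, q⟩ ⟨hs₁, hs₂, hq₁, hq₂⟩
    exact ⟨⟨s, q, hs₁, hq₁, rfl⟩, div_add_div_le_two ha hb hs₂ hq₂,
      div_add_div_sub_one_not_mem_jumpingSet ha hb hcop hs₂ hq₂⟩
  · rintro ⟨s, q⟩ ⟨hs₁, hs₂, -, -⟩ ⟨s', q'⟩ ⟨hs₁', hs₂', -, -⟩ h
    obtain ⟨rfl, rfl⟩ := eq_of_div_add_div_eq ha hb hcop hs₁ hs₂ hs₁' hs₂' h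
    rfl
  · rintro x ⟨⟨p, q, hp, hq, rfl⟩, -, hx⟩
    obtain ⟨hpa, hqb⟩ := le_of_sub_one_not_mem_jumpingSet ha hb hp hq hx
    exact ⟨(p, q), ⟨hp, hpa, hq, hqb⟩, rfl⟩
end

section
/- Let a, b be coprime positive integers and set H := { p/a + q/b : p, q positive integers }. Then every x \in H with x > 2 can be written uniquely as x = s/a + q/b + r where 1 \le s \le a, 1 \le q \le b, and r is a positive integer. -/
/-!
Write `x = p/a + q/b` and reduce `p` modulo `a` and `q` modulo `b` into the windows `[1, a]` and
`[1, b]`; the integer parts collect into `r`, which is positive because `s/a + q/b ≤ 2 < x`.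
For uniqueness, clearing denominators gives `b s + a q + a b r = b s' + a q' + a b r'`, so `a`
divides `b (s - s')`, hence `s - s'` by coprimality, and `|s - s'| < a` forces `s = s'`;
symmetrically `q = q'`, and then `r = r'`.
-/

open Set

theorem Int.exists_mem_Icc_eq_add_mul (p : ℤ) {d : ℤ} (hd : 0 < d) :
    ∃ s ∈ Icc 1 d, ∃ m, p = s + d * m := by
  refine ⟨(p - 1) % d + 1, ⟨?_, ?_⟩, (p - 1) / d, ?_⟩
  · have := Int.emod_nonneg (p - 1) hd.ne'; omega
  · have := Int.emod_lt_of_pos (p - 1) hd; omega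
  · have := Int.emod_add_mul_ediv (p - 1) d; omega

theorem Int.eq_of_dvd_sub_of_mem_Icc {d s t : ℤ} (hs : s ∈ Icc 1 d) (ht : t ∈ Icc 1 d)
    (h : d ∣ s - t) : s = t := by
  obtain ⟨hs₁, hs₂⟩ := hs
  obtain ⟨ht₁, ht₂⟩ := ht
  have := Int.eq_zero_of_abs_lt_dvd h (by rw [abs_lt]; omega)
  omega

theorem Int.eq_of_mul_add_mul_eq_s10 {a b s t c c' : ℤ} (hab : IsCoprime a b)
    (hs : s ∈ Icc 1 a) (ht : t ∈ Icc 1 a) (h : b * s + a * c = b * t + a * c') : s = t :=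
  Int.eq_of_dvd_sub_of_mem_Icc hs ht <|
    hab.dvd_of_dvd_mul_left ⟨c' - c, by linear_combination h⟩

theorem eq_of_div_add_div_add_eq {a b : ℕ} (hab : a.Coprime b) {s q r s' q' r' : ℤ}
    (hs : s ∈ Icc 1 (a : ℤ)) (hs' : s' ∈ Icc 1 (a : ℤ))
    (hq : q ∈ Icc 1 (b : ℤ)) (hq' : q' ∈ Icc 1 (b : ℤ))
    (h : (s : ℚ) / a + q / b + r = s' / a + q' / b + r') :
    s = s' ∧ q = q' ∧ r = r' := by
  have ha : (a : ℤ) ≠ 0 := by have := hs.1.trans hs.2; positivity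
  have hb : (b : ℤ) ≠ 0 := by have := hq.1.trans hq.2; positivity
  have hcop : IsCoprime (a : ℤ) b := Nat.isCoprime_iff_coprime.mpr hab
  have hcleared : (b : ℤ) * s + a * q + a * b * r = b * s' + a * q' + a * b * r' := by
    have ha' : (a : ℚ) ≠ 0 := by exact_mod_cast ha
    have hb' : (b : ℚ) ≠ 0 := by exact_mod_cast hb
    field_simp at h
    have : ((b * s + a * q + a * b * r : ℤ) : ℚ) = ((b * s' + a * q' + a * b * r' : ℤ) : ℚ) := by
      push_cast
      linear_combination h
    exact_mod_cast this
  have hss' : s = s' := Int.eq_of_mul_add_mul_eq_s10 hcop hs hs' (c := q + b * r)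
    (c' := q' + b * r') (by linear_combination hcleared)
  have hqq' : q = q' := Int.eq_of_mul_add_mul_eq_s10 hcop.symm hq hq' (c := s + a * r)
    (c' := s' + a * r') (by linear_combination hcleared)
  subst hss' hqq'
  exact ⟨rfl, rfl, mul_left_cancel₀ (mul_ne_zero ha hb) (by linarith)⟩

theorem wasp_two (a b : ℕ) (ha : 0 < a) (hb : 0 < b) (hcop : Nat.gcd a b = 1)
    (x : ℚ) (hx : ∃ p q : ℤ, 1 ≤ p ∧ 1 ≤ q ∧ x = (p : ℚ) / a + (q : ℚ) / b)
    (hx2 : 2 < x) :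
    ∃! t : ℤ × ℤ × ℤ,
      (1 ≤ t.1 ∧ t.1 ≤ a ∧ 1 ≤ t.2.1 ∧ t.2.1 ≤ b ∧ 1 ≤ t.2.2) ∧
      x = (t.1 : ℚ) / a + (t.2.1 : ℚ) / b + (t.2.2 : ℚ) := by
  obtain ⟨p, q, -, -, rfl⟩ := hx
  obtain ⟨s, hs, m, rfl⟩ := p.exists_mem_Icc_eq_add_mul (d := a) (by exact_mod_cast ha)
  obtain ⟨t, ht, n, rfl⟩ := q.exists_mem_Icc_eq_add_mul (d := b) (by exact_mod_cast hb)
  have hx : ((s + a * m : ℤ) : ℚ) / a + ((t + b * n : ℤ) : ℚ) / b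
      = s / a + t / b + ((m + n : ℤ) : ℚ) := by
    have : (a : ℚ) ≠ 0 := by positivity
    have : (b : ℚ) ≠ 0 := by positivity
    push_cast
    field_simp
    ring
  have hr : 1 ≤ m + n := by
    have hsa : (s : ℚ) / a ≤ 1 := div_le_one_of_le₀ (by exact_mod_cast hs.2) (by positivity)
    have htb : (t : ℚ) / b ≤ 1 := div_le_one_of_le₀ (by exact_mod_cast ht.2) (by positivity)
    have : (0 : ℚ) < ((m + n : ℤ) : ℚ) := by linarith
    exact_mod_cast this
  refine ⟨(s, t, m + n), ⟨⟨hs.1, hs.2, ht.1, ht.2, hr⟩, hx⟩, ?_⟩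
  rintro ⟨s', t', r'⟩ ⟨⟨hs₁, hs₂, ht₁, ht₂, -⟩, hx'⟩
  obtain ⟨rfl, rfl, rfl⟩ :=
    eq_of_div_add_div_add_eq hcop ⟨hs₁, hs₂⟩ hs ⟨ht₁, ht₂⟩ ht (hx'.symm.trans hx)
  rfl
end
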